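/- Let A : ℝ^N → ℝ^N be continuous and suppose that for each y ∈ ℤ^N there is a C¹ function φ_y : ℝ^N → ℝ with A(·−y) = A + ∇φ_y, normalized by φ_y(y/2) = 0 (so φ₀ ≡ 0). For y ∈ ℤ^N and θ ∈ ℝ let g_{y,θ}u = e^{iθ}e^{iφ_y(·)}u(·−y), and write g_y = g_{y,0}. Then: (i) for all y₁, y₂ ∈ ℤ^N there is a constant γ(y₁,y₂) ∈ ℝ such that φ_{y₁+y₂} = φ_{y₁}(·−y₂) + φ_{y₂} + γ(y₁,y₂), and consequently g_{y₂}g_{y₁} = e^{−iγ(y₁,y₂)} g_{y₁+y₂}; (ii) γ(y,0) = γ(0,y) = γ(y,−y) = 0 for every y ∈ ℤ^N; (iii) g_{y,θ}^{−1} = g_{−y,−θ} for every y ∈ ℤ^N, θ ∈ ℝ; hence the set 𝒢_A = {g_{y,θ} : y ∈ ℤ^N, θ ∈ ℝ} is a group under composition. -/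

import Mathlib

open MeasureTheory Complex Filter Topology Metric

noncomputable section

abbrev RN (N : ℕ) := EuclideanSpace ℝ (Fin N)

def pdR {N : ℕ} (f : RN N → ℝ) (j : Fin N) (x : RN N) : ℝ :=
  fderiv ℝ f x (EuclideanSpace.single j 1)

/-- embedding of `ℤ^N` into `ℝ^N` -/
def intVec {N : ℕ} (y : Fin N → ℤ) : RN N := WithLp.toLp 2 (fun i => (y i : ℝ))

/-- the magnetic shift with extra phase, `g_{y,θ} u = e^{iθ} e^{iφ_y(·)} u(·−y)` -/
def gShiftθ {N : ℕ} (φ : (Fin N → ℤ) → RN N → ℝ) (y : Fin N → ℤ) (θ : ℝ)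
    (u : RN N → ℂ) : RN N → ℂ :=
  fun x => Complex.exp (Complex.I * (θ : ℂ)) * Complex.exp (Complex.I * (φ y x : ℂ))
    * u (x - intVec y)

/-!
Both `φ_{y₁+y₂}` and `φ_{y₁}(· − y₂) + φ_{y₂}` are gauges carrying `A` to `A(· − y₁ − y₂)`, so their
difference has zero gradient and is a constant `γ(y₁, y₂)`. Composing two magnetic shifts adds
their phases, so `g_{y₂,θ₂} g_{y₁,θ₁} = g_{y₁+y₂, θ₁+θ₂−γ(y₁,y₂)}`. The normalization
`φ_y(y/2) = 0` forces `φ₀ ≡ 0` and, evaluating the cocycle identity at `−y/2`, `γ(y, −y) = 0`;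
these give the identity `g_{0,0}` and the inverses `g_{−y,−θ}`.
-/

@[simp]
lemma intVec_zero {N : ℕ} : intVec (0 : Fin N → ℤ) = 0 := by
  ext i; simp [intVec]

@[simp]
lemma intVec_add {N : ℕ} (a b : Fin N → ℤ) : intVec (a + b) = intVec a + intVec b := by
  ext i; simp [intVec]

@[simp]
lemma intVec_neg {N : ℕ} (a : Fin N → ℤ) : intVec (-a) = -intVec a := by
  ext i; simp [intVec]

theorem is_const_of_fderiv_basis_eq_zero {ι E F : Type*} [NormedAddCommGroup E]
    [NormedSpace ℝ E] [NormedAddCommGroup F] [NormedSpace ℝ F] (b : Module.Basis ι ℝ E)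
    {f : E → F} (hf : Differentiable ℝ f) (h : ∀ x i, fderiv ℝ f x (b i) = 0) (x y : E) :
    f x = f y :=
  is_const_of_fderiv_eq_zero hf
    (fun x => ContinuousLinearMap.coe_injective (b.ext fun i => by simpa using h x i)) x y

theorem eq_of_pdR_eq_zero {N : ℕ} {f : RN N → ℝ} (hf : Differentiable ℝ f)
    (h : ∀ j x, pdR f j x = 0) (x y : RN N) : f x = f y :=
  is_const_of_fderiv_basis_eq_zero (EuclideanSpace.basisFun (Fin N) ℝ).toBasis hf
    (fun x j => by simpa [pdR] using h j x) x y

lemma pdR_comp_sub {N : ℕ} (f : RN N → ℝ) (v : RN N) (j : Fin N) (x : RN N) :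
    pdR (fun x => f (x - v)) j x = pdR f j (x - v) := by
  simp only [pdR, fderiv_comp_sub]

lemma pdR_sub {N : ℕ} {f g : RN N → ℝ} {x : RN N} (hf : DifferentiableAt ℝ f x)
    (hg : DifferentiableAt ℝ g x) (j : Fin N) :
    pdR (f - g) j x = pdR f j x - pdR g j x := by
  rw [pdR, fderiv_sub hf hg]
  rfl

/-- The constant `γ(y₁, y₂)` of the cocycle identity, read off at the origin. -/
def phaseCocycle {N : ℕ} (φ : (Fin N → ℤ) → RN N → ℝ) (y₁ y₂ : Fin N → ℤ) : ℝ :=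
  φ (y₁ + y₂) 0 - φ y₁ (-intVec y₂) - φ y₂ 0

section Gauge

variable {N : ℕ} {A : RN N → RN N} {φ : (Fin N → ℤ) → RN N → ℝ}

theorem phi_zero_eq_zero (hφ : Differentiable ℝ (φ 0))
    (hgauge : ∀ y x j, A (x - intVec y) j = A x j + pdR (φ y) j x) (h0 : φ 0 0 = 0)
    (x : RN N) : φ 0 x = 0 := by
  have hpd : ∀ j x, pdR (φ 0) j x = 0 := fun j x => by
    simpa using hgauge 0 x j
  rw [eq_of_pdR_eq_zero hφ hpd x 0, h0]

theorem phi_add_eq_add_phaseCocycle (hφ : ∀ y, Differentiable ℝ (φ y))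
    (hgauge : ∀ y x j, A (x - intVec y) j = A x j + pdR (φ y) j x)
    (y₁ y₂ : Fin N → ℤ) (x : RN N) :
    φ (y₁ + y₂) x = φ y₁ (x - intVec y₂) + φ y₂ x + phaseCocycle φ y₁ y₂ := by
  set ψ : RN N → ℝ := φ (y₁ + y₂) - (fun x => φ y₁ (x - intVec y₂)) - φ y₂
  have hshift : Differentiable ℝ (fun x => φ y₁ (x - intVec y₂)) :=
    (hφ y₁).comp (differentiable_id.sub_const _)
  have hpd : ∀ j x, pdR ψ j x = 0 := by
    intro j x
    have h₁₂ := hgauge (y₁ + y₂) x j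
    have h₁ := hgauge y₁ (x - intVec y₂) j
    have h₂ := hgauge y₂ x j
    rw [intVec_add, sub_add_eq_sub_sub_swap, h₁, h₂] at h₁₂
    rw [pdR_sub (((hφ _).sub hshift) x) (hφ y₂ x), pdR_sub (hφ _ x) (hshift x), pdR_comp_sub]
    linarith
  have := eq_of_pdR_eq_zero (((hφ _).sub hshift).sub (hφ y₂)) hpd x 0
  simp only [Pi.sub_apply, zero_sub] at this
  rw [phaseCocycle]
  linarith

theorem phaseCocycle_zero_right (hφ0 : ∀ x, φ 0 x = 0) (y : Fin N → ℤ) :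
    phaseCocycle φ y 0 = 0 := by
  simp [phaseCocycle, hφ0]

theorem phaseCocycle_zero_left (hφ0 : ∀ x, φ 0 x = 0) (y : Fin N → ℤ) :
    phaseCocycle φ 0 y = 0 := by
  simp [phaseCocycle, hφ0]

theorem phaseCocycle_neg_right (hφ : ∀ y, Differentiable ℝ (φ y))
    (hgauge : ∀ y x j, A (x - intVec y) j = A x j + pdR (φ y) j x) (hφ0 : ∀ x, φ 0 x = 0)
    (hnorm : ∀ y, φ y ((1 / 2 : ℝ) • intVec y) = 0) (y : Fin N → ℤ) :
    phaseCocycle φ y (-y) = 0 := by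
  have h := phi_add_eq_add_phaseCocycle hφ hgauge y (-y) ((1 / 2 : ℝ) • intVec (-y))
  have hhalf : (1 / 2 : ℝ) • intVec (-y) - intVec (-y) = (1 / 2 : ℝ) • intVec y := by
    rw [intVec_neg]; module
  rw [add_neg_cancel, hhalf, hnorm, hnorm, hφ0] at h
  linarith

end Gauge

section Shifts

variable {N : ℕ} {φ : (Fin N → ℤ) → RN N → ℝ}

lemma gShiftθ_apply_eq_exp_mul (y : Fin N → ℤ) (θ : ℝ) (u : RN N → ℂ) (x : RN N) :
    gShiftθ φ y θ u x = Complex.exp (Complex.I * θ) * gShiftθ φ y 0 u x := by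
  simp [gShiftθ, mul_assoc]

lemma gShiftθ_zero_zero (hφ0 : ∀ x, φ 0 x = 0) (u : RN N → ℂ) : gShiftθ φ 0 0 u = u := by
  funext x
  simp [gShiftθ, hφ0]

theorem gShiftθ_gShiftθ_of_phase {y₁ y₂ : Fin N → ℤ} {c : ℝ}
    (h : ∀ x, φ (y₁ + y₂) x = φ y₁ (x - intVec y₂) + φ y₂ x + c) (θ₁ θ₂ : ℝ) (u : RN N → ℂ) :
    gShiftθ φ y₂ θ₂ (gShiftθ φ y₁ θ₁ u) = gShiftθ φ (y₁ + y₂) (θ₁ + θ₂ - c) u := by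
  funext x
  simp only [gShiftθ, h, intVec_add, sub_add_eq_sub_sub_swap, ← Complex.exp_add, ← mul_assoc]
  congr 2
  push_cast
  ring

end Shifts

theorem magnetic_shifts_group_general (N : ℕ) (A : RN N → RN N)
    (φ : (Fin N → ℤ) → RN N → ℝ)
    (hφC1 : ∀ y, ContDiff ℝ 1 (φ y))
    (hgauge : ∀ (y : Fin N → ℤ) (x : RN N) (j : Fin N),
        A (x - intVec y) j = A x j + pdR (φ y) j x)
    (hnorm : ∀ y : Fin N → ℤ, φ y ((1 / 2 : ℝ) • intVec y) = 0) :
    (∀ x : RN N, φ 0 x = 0) ∧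
    (∃ γ : (Fin N → ℤ) → (Fin N → ℤ) → ℝ,
      (∀ (y₁ y₂ : Fin N → ℤ) (x : RN N),
          φ (y₁ + y₂) x = φ y₁ (x - intVec y₂) + φ y₂ x + γ y₁ y₂) ∧
      (∀ (y₁ y₂ : Fin N → ℤ) (u : RN N → ℂ) (x : RN N),
          gShiftθ φ y₂ 0 (gShiftθ φ y₁ 0 u) x
            = Complex.exp (-(Complex.I * (γ y₁ y₂ : ℂ))) * gShiftθ φ (y₁ + y₂) 0 u x) ∧
      (∀ y : Fin N → ℤ, γ y 0 = 0 ∧ γ 0 y = 0 ∧ γ y (-y) = 0)) ∧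
    (∀ (y : Fin N → ℤ) (θ : ℝ) (u : RN N → ℂ),
        gShiftθ φ (-y) (-θ) (gShiftθ φ y θ u) = u ∧
        gShiftθ φ y θ (gShiftθ φ (-y) (-θ) u) = u) ∧
    (∀ u : RN N → ℂ, gShiftθ φ 0 0 u = u) ∧
    (∀ (y₁ y₂ : Fin N → ℤ) (θ₁ θ₂ : ℝ), ∃ (y₃ : Fin N → ℤ) (θ₃ : ℝ),
        ∀ u : RN N → ℂ, gShiftθ φ y₂ θ₂ (gShiftθ φ y₁ θ₁ u) = gShiftθ φ y₃ θ₃ u) := by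
  have hφ : ∀ y, Differentiable ℝ (φ y) := fun y => (hφC1 y).differentiable one_ne_zero
  have hφ0 : ∀ x, φ 0 x = 0 := phi_zero_eq_zero (hφ 0) hgauge (by simpa using hnorm 0)
  have hadd := phi_add_eq_add_phaseCocycle hφ hgauge
  have hγneg := phaseCocycle_neg_right hφ hgauge hφ0 hnorm
  have hcomp : ∀ y₁ y₂ θ₁ θ₂ u, gShiftθ φ y₂ θ₂ (gShiftθ φ y₁ θ₁ u)
      = gShiftθ φ (y₁ + y₂) (θ₁ + θ₂ - phaseCocycle φ y₁ y₂) u :=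
    fun y₁ y₂ => gShiftθ_gShiftθ_of_phase (hadd y₁ y₂)
  have hinv : ∀ y θ u, gShiftθ φ (-y) (-θ) (gShiftθ φ y θ u) = u := fun y θ u => by
    rw [hcomp, add_neg_cancel, add_neg_cancel, hγneg, sub_zero, gShiftθ_zero_zero hφ0]
  refine ⟨hφ0, ⟨phaseCocycle φ, hadd, fun y₁ y₂ u x => ?_,
      fun y => ⟨phaseCocycle_zero_right hφ0 y, phaseCocycle_zero_left hφ0 y, hγneg y⟩⟩,
    fun y θ u => ⟨hinv y θ u, by simpa using hinv (-y) (-θ) u⟩,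
    gShiftθ_zero_zero hφ0, fun y₁ y₂ θ₁ θ₂ => ⟨_, _, hcomp y₁ y₂ θ₁ θ₂⟩⟩
  rw [hcomp, gShiftθ_apply_eq_exp_mul]
  simp

/-- the group of magnetic shifts in the lattice-periodic case.
Assume that for every `y ∈ ℤ^N` there is a `C¹` function `φ_y` with
`A(·−y) = A + ∇φ_y`, normalized by `φ_y(y/2) = 0`. Then `φ₀ ≡ 0`; (i) for all
`y₁, y₂` there is a constant `γ(y₁,y₂)` with
`φ_{y₁+y₂} = φ_{y₁}(·−y₂) + φ_{y₂} + γ(y₁,y₂)` and consequently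
`g_{y₂} g_{y₁} = e^{−iγ(y₁,y₂)} g_{y₁+y₂}`; (ii) `γ(y,0) = γ(0,y) = γ(y,−y) = 0`;
(iii) `g_{y,θ}⁻¹ = g_{−y,−θ}`; hence `𝒢_A = {g_{y,θ}}` is a group under composition
(it is closed under composition, contains the identity `g_{0,0}`, and inverses). -/
theorem magnetic_shifts_group (N : ℕ) (A : RN N → RN N) (hA : Continuous A)
    (φ : (Fin N → ℤ) → RN N → ℝ)
    (hφC1 : ∀ y, ContDiff ℝ 1 (φ y))
    (hgauge : ∀ (y : Fin N → ℤ) (x : RN N) (j : Fin N),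
        A (x - intVec y) j = A x j + pdR (φ y) j x)
    (hnorm : ∀ y : Fin N → ℤ, φ y ((1 / 2 : ℝ) • intVec y) = 0) :
    (∀ x : RN N, φ 0 x = 0) ∧
    (∃ γ : (Fin N → ℤ) → (Fin N → ℤ) → ℝ,
      (∀ (y₁ y₂ : Fin N → ℤ) (x : RN N),
          φ (y₁ + y₂) x = φ y₁ (x - intVec y₂) + φ y₂ x + γ y₁ y₂) ∧
      (∀ (y₁ y₂ : Fin N → ℤ) (u : RN N → ℂ) (x : RN N),
          gShiftθ φ y₂ 0 (gShiftθ φ y₁ 0 u) x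
            = Complex.exp (-(Complex.I * (γ y₁ y₂ : ℂ))) * gShiftθ φ (y₁ + y₂) 0 u x) ∧
      (∀ y : Fin N → ℤ, γ y 0 = 0 ∧ γ 0 y = 0 ∧ γ y (-y) = 0)) ∧
    (∀ (y : Fin N → ℤ) (θ : ℝ) (u : RN N → ℂ),
        gShiftθ φ (-y) (-θ) (gShiftθ φ y θ u) = u ∧
        gShiftθ φ y θ (gShiftθ φ (-y) (-θ) u) = u) ∧
    (∀ u : RN N → ℂ, gShiftθ φ 0 0 u = u) ∧
    (∀ (y₁ y₂ : Fin N → ℤ) (θ₁ θ₂ : ℝ), ∃ (y₃ : Fin N → ℤ) (θ₃ : ℝ),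
        ∀ u : RN N → ℂ, gShiftθ φ y₂ θ₂ (gShiftθ φ y₁ θ₁ u) = gShiftθ φ y₃ θ₃ u) :=
  magnetic_shifts_group_general N A φ hφC1 hgauge hnorm

end
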